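/- arXiv:2002.04257 — 2 statements merged into one kernel-verified Lean document; each statement's English description precedes it below -/
import Mathlib

section
/- Let (Z, E) be a reflexive graph whose relation E is antisymmetric. Then for every z ∈ Z, the extent of the concept z_s ⊓ z_r equals extent(z_s) \ {z}; that is, {z}^{↑↓} ∩ {z}^↓ = {z}^{↑↓} \ {z}. -/
open Set

/-- The object concept `z_s = ({z}^{↑↓}, {z}^↑)`. -/
def objectConcept {A X : Type*} (I : A → X → Prop) (a : A) : Concept A X I where
  extent := lowerPolar I (upperPolar I {a})
  intent := upperPolar I {a}
  upperPolar_extent := upperPolar_lowerPolar_upperPolar I {a}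
  lowerPolar_intent := rfl

/-- The attribute concept `z_r = ({z}^↓, {z}^{↓↑})`. -/
def attributeConcept {A X : Type*} (I : A → X → Prop) (x : X) : Concept A X I where
  extent := lowerPolar I {x}
  intent := upperPolar I (lowerPolar I {x})
  upperPolar_extent := rfl
  lowerPolar_intent := lowerPolar_upperPolar_lowerPolar I {x}

section Polarity

variable {A X : Type*} {I : A → X → Prop}

theorem mem_extent_objectConcept {a b : A} :
    b ∈ (objectConcept I a).extent ↔ ∀ x, I a x → I b x := by
  simp only [objectConcept, mem_lowerPolar_iff, mem_upperPolar_singleton]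

theorem mem_extent_attributeConcept {a : A} {x : X} :
    a ∈ (attributeConcept I x).extent ↔ I a x :=
  mem_lowerPolar_singleton I

end Polarity

theorem rel_of_mem_extent_objectConcept {Z : Type*} {E : Z → Z → Prop} {z a : Z}
    (ha : a ∈ (objectConcept (fun a x => ¬ E a x) z).extent) (haa : E a a) : E z a :=
  not_not.mp fun hza => mem_extent_objectConcept.mp ha a hza haa

/-- For a reflexive, antisymmetric graph `(Z, E)` and any `z`, the extent of the concept
`z_s ⊓ z_r` equals `extent(z_s) \ {z}`; that is, `{z}^{↑↓} ∩ {z}^↓ = {z}^{↑↓} \ {z}`. -/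
theorem extent_inf_objectConcept_attributeConcept {Z : Type*} (E : Z → Z → Prop)
    (hrefl : Reflexive E)
    (hanti : ∀ z z' : Z, E z z' → E z' z → z = z') (z : Z) :
    (objectConcept (fun a x => ¬ E a x) z ⊓ attributeConcept (fun a x => ¬ E a x) z).extent =
      (objectConcept (fun a x => ¬ E a x) z).extent \ {z} := by
  ext a
  rw [Concept.extent_min, mem_inter_iff, mem_sdiff, mem_extent_attributeConcept,
    mem_singleton_iff]
  refine and_congr_right fun ha => ⟨?_, fun hne haz => hne ?_⟩
  · rintro hnaz rfl
    exact hnaz (hrefl a)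
  · exact hanti a z haz (rel_of_mem_extent_objectConcept ha (hrefl a))
end

section
/- Let (Z, E) be a reflexive graph whose relation E is antisymmetric, and suppose the concept lattice of the associated polarity (Z, Z, I_{Eᶜ}) satisfies the completely distributive law. For u ∈ Z define κ(u) := ⨆ {w_s | w ∈ Z, ¬(u_s ≤ w_s)}. Then for every concept c of the associated polarity: u_s ≤ c if and only if ¬(c ≤ κ(u)). -/
/-!
By complete distributivity (already its binary instance suffices) the join-irreducible object
concept `u_s` is join-prime. If `u_s ≤ κ(u)`, reflexivity yields some `w` with `¬ u_s ≤ w_s`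
and `E w u`; then `u_s ≤ w_s ⊔ Θ`, where `Θ` is the join of the `y_s` over the proper
out-neighbours `y` of `u`. Primality gives `u_s ≤ Θ`, which antisymmetry rules out, since `u`
is an attribute of `Θ`.
-/

open Set

universe u v

theorem inf_sup_le_of_iInf_iSup_eq {α : Type*} [CompleteLattice α]
    (h : ∀ (ι : Type u) (κ : ι → Type v) (f : (i : ι) → κ i → α),
      ⨅ i, ⨆ j, f i j = ⨆ g : (i : ι) → κ i, ⨅ i, f i (g i))
    (a b c : α) : a ⊓ (b ⊔ c) ≤ a ⊓ b ⊔ a ⊓ c := by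
  let f : ULift.{u} Bool → ULift.{v} Bool → α := fun i j =>
    if i.down then a else if j.down then b else c
  calc a ⊓ (b ⊔ c) = ⨅ i, ⨆ j, f i j := by
        simp [f, iInf_ulift, iSup_ulift, iInf_bool_eq, iSup_bool_eq]
    _ = ⨆ g : ULift Bool → ULift Bool, ⨅ i, f i (g i) := h _ _ f
    _ ≤ a ⊓ b ⊔ a ⊓ c := iSup_le fun g => by
        simp only [f, iInf_ulift, iInf_bool_eq, if_true, Bool.false_eq_true, if_false]
        split_ifs
        exacts [le_sup_left, le_sup_right]

theorem SupIrred.supPrime_of_inf_sup_le {α : Type*} [Lattice α] {a : α} (ha : SupIrred a)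
    (h : ∀ a b c : α, a ⊓ (b ⊔ c) ≤ a ⊓ b ⊔ a ⊓ c) : SupPrime a :=
  letI := DistribLattice.ofInfSupLe h
  ha.supPrime

section Polarity

variable {A X : Type*} {I : A → X → Prop}

theorem objectConcept_eq_ofObject (I : A → X → Prop) (a : A) :
    objectConcept I a = Concept.ofObject I a :=
  rfl

theorem objectConcept_le_iff {a : A} {c : Concept A X I} :
    objectConcept I a ≤ c ↔ a ∈ c.extent := by
  rw [objectConcept_eq_ofObject, Concept.ofObjects_le_iff, singleton_subset_iff]

theorem mem_intent_objectConcept {a : A} {x : X} :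
    x ∈ (objectConcept I a).intent ↔ I a x :=
  mem_upperPolar_singleton I

def kappa (I : A → X → Prop) (u : A) : Concept A X I :=
  sSup {d | ∃ w, d = objectConcept I w ∧ ¬ objectConcept I u ≤ objectConcept I w}

theorem le_kappa_of_not_objectConcept_le {u : A} {c : Concept A X I}
    (h : ¬ objectConcept I u ≤ c) : c ≤ kappa I u := by
  intro w hw
  have hwc : objectConcept I w ≤ c := objectConcept_le_iff.2 hw
  exact objectConcept_le_iff.1 <| le_sSup ⟨w, rfl, fun huw => h (huw.trans hwc)⟩

end Polarity

section Graph

variable {Z : Type*} {E : Z → Z → Prop}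

theorem notMem_intent_of_objectConcept_le (hrefl : ∀ z, E z z) {z : Z}
    {c : Concept Z Z (fun a x => ¬ E a x)} (h : objectConcept _ z ≤ c) : z ∉ c.intent :=
  fun hz => Concept.rel_extent_intent (objectConcept_le_iff.1 h) hz (hrefl z)

theorem adj_of_mem_extent_objectConcept (hrefl : ∀ z, E z z) {u a : Z}
    (ha : a ∈ (objectConcept (fun a x => ¬ E a x) u).extent) : E u a := by
  by_contra h
  exact Concept.rel_extent_intent ha (mem_intent_objectConcept.2 h) (hrefl a)

theorem objectConcept_le_of_le_of_notMem_intent (hrefl : ∀ z, E z z)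
    (hanti : ∀ z z' : Z, E z z' → E z' z → z = z') {u : Z}
    {b : Concept Z Z (fun a x => ¬ E a x)} (hb : b ≤ objectConcept _ u) (hu : u ∉ b.intent) :
    objectConcept _ u ≤ b := by
  obtain ⟨a, ha, hau⟩ : ∃ a ∈ b.extent, E a u := by
    rw [← b.upperPolar_extent, mem_upperPolar_iff] at hu
    simpa only [not_forall, not_not, exists_prop] using hu
  have hua : E u a := adj_of_mem_extent_objectConcept hrefl (hb ha)
  rw [objectConcept_le_iff, ← hanti a u hau hua]
  exact ha

theorem supIrred_objectConcept (hrefl : ∀ z, E z z)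
    (hanti : ∀ z z' : Z, E z z' → E z' z → z = z') (u : Z) :
    SupIrred (objectConcept (fun a x => ¬ E a x) u) := by
  refine ⟨fun hmin => notMem_intent_of_objectConcept_le hrefl hmin.eq_bot.le (mem_univ u),
    fun b c hbc => ?_⟩
  have hu := notMem_intent_of_objectConcept_le hrefl hbc.ge
  rw [Concept.intent_sup, mem_inter_iff, not_and_or] at hu
  have hb : b ≤ objectConcept _ u := le_sup_left.trans hbc.le
  have hc : c ≤ objectConcept _ u := le_sup_right.trans hbc.le
  rcases hu with hu | hu
  · exact .inl <| hb.antisymm <| objectConcept_le_of_le_of_notMem_intent hrefl hanti hb hu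
  · exact .inr <| hc.antisymm <| objectConcept_le_of_le_of_notMem_intent hrefl hanti hc hu

def properOutNeighbourJoin (E : Z → Z → Prop) (u : Z) : Concept Z Z (fun a x => ¬ E a x) :=
  ⨆ y : {y // E u y ∧ y ≠ u}, objectConcept _ y

theorem mem_intent_properOutNeighbourJoin (hanti : ∀ z z' : Z, E z z' → E z' z → z = z')
    (u : Z) : u ∈ (properOutNeighbourJoin E u).intent := by
  rw [properOutNeighbourJoin, Concept.intent_iSup, mem_iInter]
  exact fun ⟨y, huy, hyu⟩ => mem_intent_objectConcept.2 fun hyu' => hyu (hanti y u hyu' huy)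

theorem objectConcept_le_sup_properOutNeighbourJoin (hrefl : ∀ z, E z z) {u w : Z}
    (hwu : E w u) :
    objectConcept _ u ≤ objectConcept _ w ⊔ properOutNeighbourJoin E u := by
  rw [← Concept.intent_subset_intent_iff, Concept.intent_sup]
  rintro t ⟨htw, htΘ⟩
  refine mem_intent_objectConcept.2 fun hut => ?_
  obtain rfl | htu := eq_or_ne t u
  · exact mem_intent_objectConcept.1 htw hwu
  · have ht : objectConcept _ t ≤ properOutNeighbourJoin E u :=
      le_iSup (fun y : {y // E u y ∧ y ≠ u} => objectConcept _ y.1) ⟨t, hut, htu⟩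
    exact notMem_intent_of_objectConcept_le hrefl ht htΘ

theorem not_objectConcept_le_kappa (hrefl : ∀ z, E z z)
    (hanti : ∀ z z' : Z, E z z' → E z' z → z = z') {u : Z}
    (hprime : SupPrime (objectConcept (fun a x => ¬ E a x) u)) :
    ¬ objectConcept _ u ≤ kappa (fun a x => ¬ E a x) u := by
  intro h
  have hu := notMem_intent_of_objectConcept_le hrefl h
  simp only [kappa, Concept.intent_sSup, mem_iInter₂, not_forall] at hu
  obtain ⟨_, ⟨w, rfl, hnle⟩, hwu⟩ := hu
  have hwu : E w u := not_not.1 fun hwu' => hwu (mem_intent_objectConcept.2 hwu')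
  rcases hprime.2 (objectConcept_le_sup_properOutNeighbourJoin hrefl hwu) with h | h
  · exact hnle h
  · exact notMem_intent_of_objectConcept_le hrefl h (mem_intent_properOutNeighbourJoin hanti u)

end Graph

/-- If `(Z, E)` is a reflexive, antisymmetric graph whose associated concept lattice
satisfies the completely distributive law, and `κ(u) := ⨆ {w_s | ¬ u_s ≤ w_s}`, then for
every concept `c`: `u_s ≤ c` iff `¬ c ≤ κ(u)`. -/
theorem objectConcept_le_iff_not_le_kappa {Z : Type*} (E : Z → Z → Prop)
    (hrefl : Reflexive E)
    (hanti : ∀ z z' : Z, E z z' → E z' z → z = z')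
    (hdist : ∀ (ι : Type u) (κ : ι → Type v)
      (f : (i : ι) → κ i → Concept Z Z (fun a x => ¬ E a x)),
      ⨅ i, ⨆ j, f i j = ⨆ g : (i : ι) → κ i, ⨅ i, f i (g i))
    (u : Z) (c : Concept Z Z (fun a x => ¬ E a x)) :
    objectConcept (fun a x => ¬ E a x) u ≤ c ↔
      ¬ c ≤ sSup {d : Concept Z Z (fun a x => ¬ E a x) | ∃ w : Z,
        d = objectConcept (fun a x => ¬ E a x) w ∧
        ¬ objectConcept (fun a x => ¬ E a x) u ≤ objectConcept (fun a x => ¬ E a x) w} := by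
  have hprime := (supIrred_objectConcept hrefl hanti u).supPrime_of_inf_sup_le
    (inf_sup_le_of_iInf_iSup_eq hdist)
  exact ⟨fun huc hck => not_objectConcept_le_kappa hrefl hanti hprime (huc.trans hck),
    fun h => by_contra fun hu => h (le_kappa_of_not_objectConcept_le hu)⟩
end
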